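/- arXiv:2212.08574 — 4 statements merged into one kernel-verified Lean document; each statement's English description precedes it below -/
import Mathlib

section
/- Let c be a positive integer coprime to 6, and let ℓ be an integer. Then the sum over k modulo 12c of (12/k) · e(kℓ/(12c)) equals c·√12·(12/(ℓ/c)) if c divides ℓ, and equals 0 otherwise. Here (12/·) denotes the Kronecker symbol and e(x) = exp(2πix). -/
open Complex Finset

noncomputable def e (x : ℝ) : ℂ := Complex.exp (2 * Real.pi * Complex.I * x)

def kron12 (k : ℤ) : ℤ :=
  if k % 12 = 1 ∨ k % 12 = 11 then 1
  else if k % 12 = 5 ∨ k % 12 = 7 then -1 else 0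

lemma e_add (x y : ℝ) : e (x + y) = e x * e y := by
  simp [e, ← Complex.exp_add]; ring_nf
lemma e_int (n : ℤ) : e n = 1 := by
  simp [e]
  rw [show 2 * (Real.pi:ℂ) * Complex.I * n = n * (2 * Real.pi * Complex.I) by ring]
  exact Complex.exp_int_mul_two_pi_mul_I n
lemma e_nat_mul (n : ℕ) (x : ℝ) : e (n * x) = e x ^ n := by
  simp [e, ← Complex.exp_nat_mul]; ring_nf

lemma e_eq_one_iff (x : ℝ) : e x = 1 ↔ ∃ n : ℤ, x = n := by
  rw [e, Complex.exp_eq_one_iff]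
  constructor
  · rintro ⟨n, hn⟩
    refine ⟨n, ?_⟩
    have hπ : (2 * (Real.pi:ℂ) * Complex.I) ≠ 0 :=
      mul_ne_zero (mul_ne_zero two_ne_zero (Complex.ofReal_ne_zero.mpr Real.pi_ne_zero)) Complex.I_ne_zero
    have : (x : ℂ) = n := by
      have h2 : (2 * (Real.pi:ℂ) * Complex.I) * x = (2 * (Real.pi:ℂ) * Complex.I) * n := by
        rw [hn]; ring
      exact mul_left_cancel₀ hπ h2
    exact_mod_cast this
  · rintro ⟨n, hn⟩
    exact ⟨n, by rw [hn]; push_cast; ring⟩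

lemma geom (c : ℕ) (hc : 0 < c) (ℓ : ℤ) :
    ∑ a ∈ Finset.range c, e ((a : ℝ) * ℓ / c) = if (c:ℤ) ∣ ℓ then (c : ℂ) else 0 := by
  have harg : ∀ a : ℕ, (a : ℝ) * ℓ / c = a * (ℓ / c) := fun a => by ring
  have hz : ∀ a : ℕ, e ((a:ℝ) * ℓ / c) = e ((ℓ:ℝ)/c) ^ a := fun a => by
    rw [harg, e_nat_mul]
  simp_rw [hz]
  by_cases hdvd : (c:ℤ) ∣ ℓ
  · rw [if_pos hdvd]
    obtain ⟨m, rfl⟩ := hdvd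
    have : ((c:ℝ) * m) / c = (m:ℤ) := by
      push_cast
      field_simp
    rw [show ((((c:ℤ) * m : ℤ)) : ℝ) = (c:ℝ) * m by push_cast; ring, this, e_int]
    simp
  · rw [if_neg hdvd]
    have hne : e ((ℓ:ℝ)/c) ≠ 1 := by
      rw [Ne, e_eq_one_iff]
      rintro ⟨n, hn⟩
      apply hdvd
      refine ⟨n, ?_⟩
      have : (ℓ:ℝ) = c * n := by
        field_simp at hn
        linarith [hn]
      exact_mod_cast this
    rw [geom_sum_eq hne]
    have : e ((ℓ:ℝ)/c) ^ c = 1 := by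
      rw [← e_nat_mul]
      have : (c:ℝ) * ((ℓ:ℝ)/c) = (ℓ:ℤ) := by
        field_simp
      rw [this, e_int]
    rw [this]
    simp

lemma e_per (x : ℝ) (n : ℤ) : e (x + n) = e x := by
  rw [e_add, e_int, mul_one]

lemma e_val (x : ℝ) : e x = (Real.cos (2*Real.pi*x) : ℂ) + (Real.sin (2*Real.pi*x) : ℂ) * I := by
  rw [e, show (2*(Real.pi:ℂ)*I*x) = ((2*Real.pi*x : ℝ):ℂ) * I by push_cast; ring,
    Complex.exp_mul_I, Complex.ofReal_cos, Complex.ofReal_sin]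

lemma sqrt12 : Real.sqrt 12 = 2 * Real.sqrt 3 := by
  have h3 : Real.sqrt 3 ^ 2 = 3 := Real.sq_sqrt (by norm_num)
  have h12 : Real.sqrt 12 ^ 2 = 12 := Real.sq_sqrt (by norm_num)
  nlinarith [Real.sqrt_nonneg 3, Real.sqrt_nonneg 12]

lemma key : e (1/12) - e (5/12) - e (7/12) + e (11/12) = (Real.sqrt 12 : ℂ) := by
  rw [e_val, e_val, e_val, e_val]
  rw [show 2*Real.pi*(1/12) = Real.pi/6 by ring,
      show 2*Real.pi*(5/12) = Real.pi - Real.pi/6 by ring,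
      show 2*Real.pi*(7/12) = Real.pi + Real.pi/6 by ring,
      show 2*Real.pi*(11/12) = 2*Real.pi - Real.pi/6 by ring]
  rw [Real.cos_pi_sub, Real.sin_pi_sub, Real.cos_two_pi_sub, Real.sin_two_pi_sub,
      Real.cos_add, Real.sin_add, Real.cos_pi, Real.sin_pi, Real.cos_pi_div_six, Real.sin_pi_div_six,
      sqrt12]
  push_cast
  ring

lemma ered (b : ℝ) (n : ℤ) (a : ℝ) (h : a = b + n) : e a = e b := by rw [h, e_per]

lemma gauss (m : ℤ) : ∑ b ∈ Finset.range 12, (kron12 (b:ℤ) : ℂ) * e ((b:ℝ) * m / 12) =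
    (Real.sqrt 12 : ℂ) * (kron12 m : ℂ) := by
  obtain ⟨q, r, hr0, hr12, hm⟩ : ∃ q r : ℤ, 0 ≤ r ∧ r < 12 ∧ m = 12 * q + r :=
    ⟨m / 12, m % 12, Int.emod_nonneg m (by norm_num), Int.emod_lt_of_pos m (by norm_num), by omega⟩
  have hk : kron12 m = kron12 r := by
    have : m % 12 = r % 12 := by omega
    simp [kron12, this]
  have he : ∀ b : ℕ, e ((b:ℝ) * m / 12) = e ((b:ℝ) * r / 12) := by
    intro b
    have : (b:ℝ) * m / 12 = (b:ℝ) * r / 12 + ((b * q : ℤ) : ℝ) := by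
      rw [hm]; push_cast; ring
    rw [this, e_per]
  simp_rw [he, hk]
  clear hk he hm m
  interval_cases r
  all_goals norm_num [Finset.sum_range_succ, kron12]
  · linear_combination key
  · rw [show e ((7:ℝ)/6) = e (1/6) from ered _ 1 _ (by norm_num),
        show e ((11:ℝ)/6) = e (5/6) from ered _ 1 _ (by norm_num)]; ring
  · rw [show e ((5:ℝ)/4) = e (1/4) from ered _ 1 _ (by norm_num),
        show e ((11:ℝ)/4) = e (7/4) from ered _ 1 _ (by norm_num)]; ring
  · rw [show e ((7:ℝ)/3) = e (1/3) from ered _ 2 _ (by norm_num),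
        show e ((11:ℝ)/3) = e (5/3) from ered _ 2 _ (by norm_num)]; ring
  · rw [show e ((25:ℝ)/12) = e (1/12) from ered _ 2 _ (by norm_num),
        show e ((35:ℝ)/12) = e (11/12) from ered _ 2 _ (by norm_num),
        show e ((55:ℝ)/12) = e (7/12) from ered _ 4 _ (by norm_num)]
    linear_combination -key
  · rw [show e ((5:ℝ)/2) = e (1/2) from ered _ 2 _ (by norm_num),
        show e ((7:ℝ)/2) = e (1/2) from ered _ 3 _ (by norm_num),
        show e ((11:ℝ)/2) = e (1/2) from ered _ 5 _ (by norm_num)]; ring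
  · rw [show e ((35:ℝ)/12) = e (11/12) from ered _ 2 _ (by norm_num),
        show e ((49:ℝ)/12) = e (1/12) from ered _ 4 _ (by norm_num),
        show e ((77:ℝ)/12) = e (5/12) from ered _ 6 _ (by norm_num)]
    linear_combination -key
  · rw [show e ((10:ℝ)/3) = e (1/3) from ered _ 3 _ (by norm_num),
        show e ((14:ℝ)/3) = e (2/3) from ered _ 4 _ (by norm_num),
        show e ((22:ℝ)/3) = e (1/3) from ered _ 7 _ (by norm_num)]; ring
  · rw [show e ((15:ℝ)/4) = e (3/4) from ered _ 3 _ (by norm_num),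
        show e ((21:ℝ)/4) = e (1/4) from ered _ 5 _ (by norm_num),
        show e ((33:ℝ)/4) = e (1/4) from ered _ 8 _ (by norm_num)]; ring
  · rw [show e ((25:ℝ)/6) = e (1/6) from ered _ 4 _ (by norm_num),
        show e ((35:ℝ)/6) = e (5/6) from ered _ 5 _ (by norm_num),
        show e ((55:ℝ)/6) = e (1/6) from ered _ 9 _ (by norm_num)]; ring
  · rw [show e ((55:ℝ)/12) = e (7/12) from ered _ 4 _ (by norm_num),
        show e ((77:ℝ)/12) = e (5/12) from ered _ 6 _ (by norm_num),
        show e ((121:ℝ)/12) = e (1/12) from ered _ 10 _ (by norm_num)]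
    linear_combination key


theorem stmt_0 (c : ℕ) (hc : 0 < c) (hcop : Nat.Coprime c 6) (ℓ : ℤ) :
    ∑ k ∈ Finset.range (12 * c), (kron12 (k : ℤ) : ℂ) * e ((k : ℝ) * (ℓ : ℝ) / (12 * c)) =
      if (c : ℤ) ∣ ℓ then (c : ℂ) * (Real.sqrt 12 : ℂ) * (kron12 (ℓ / c) : ℂ) else 0 := by
  have hc0 : (c : ℝ) ≠ 0 := Nat.cast_ne_zero.mpr hc.ne'
  have reindex : ∀ f : ℕ → ℂ, ∑ k ∈ Finset.range (12 * c), f k =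
      ∑ a ∈ Finset.range c, ∑ b ∈ Finset.range 12, f (12 * a + b) := by
    intro f
    rw [← Finset.sum_product']
    refine (Finset.sum_nbij' (fun p => 12 * p.1 + p.2) (fun k => (k / 12, k % 12))
      ?_ ?_ ?_ ?_ ?_).symm
    · intro p hp
      simp only [Finset.mem_product, Finset.mem_range] at hp ⊢
      omega
    · intro k hk
      simp only [Finset.mem_product, Finset.mem_range] at hk ⊢
      omega
    · intro p hp
      simp only [Finset.mem_product, Finset.mem_range] at hp
      ext <;> simp <;> omega
    · intro k hk
      dsimp only
      omega
    · intro p hp; rfl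
  rw [reindex]
  have step : ∀ a b : ℕ, b < 12 →
      (kron12 ((12 * a + b : ℕ) : ℤ) : ℂ) * e (((12 * a + b : ℕ) : ℝ) * ℓ / (12 * c)) =
      ((kron12 (b : ℤ) : ℂ) * e ((b : ℝ) * ℓ / (12 * c))) * e ((a : ℝ) * ℓ / c) := by
    intro a b hb
    have hk : kron12 ((12 * a + b : ℕ) : ℤ) = kron12 (b : ℤ) := by
      have h1 : ((12 * a + b : ℕ) : ℤ) % 12 = (b : ℤ) % 12 := by push_cast; omega
      simp only [kron12, h1]
    have harg : ((12 * a + b : ℕ) : ℝ) * ℓ / (12 * c) =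
        (b : ℝ) * ℓ / (12 * c) + (a : ℝ) * ℓ / c := by
      push_cast; field_simp; ring
    rw [hk, harg, e_add, mul_assoc]
  have hsum : ∑ a ∈ Finset.range c, ∑ b ∈ Finset.range 12,
      (kron12 ((12 * a + b : ℕ) : ℤ) : ℂ) * e (((12 * a + b : ℕ) : ℝ) * ℓ / (12 * c)) =
      (∑ b ∈ Finset.range 12, (kron12 (b : ℤ) : ℂ) * e ((b : ℝ) * ℓ / (12 * c))) *
      (∑ a ∈ Finset.range c, e ((a : ℝ) * ℓ / c)) := by
    rw [Finset.sum_mul_sum]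
    rw [Finset.sum_comm]
    refine Finset.sum_congr rfl fun b hb => Finset.sum_congr rfl fun a ha => ?_
    exact step a b (Finset.mem_range.mp hb)
  rw [hsum, geom c hc ℓ]
  by_cases hdvd : (c : ℤ) ∣ ℓ
  · rw [if_pos hdvd, if_pos hdvd]
    obtain ⟨m, rfl⟩ := hdvd
    have hdiv : (c : ℤ) * m / c = m := Int.mul_ediv_cancel_left m (by exact_mod_cast hc.ne')
    have harg2 : ∀ b : ℕ, (b : ℝ) * ((c : ℤ) * m : ℤ) / (12 * c) = (b : ℝ) * m / 12 := by
      intro b; push_cast; field_simp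
    simp_rw [harg2, hdiv]
    rw [gauss m]
    ring
  · rw [if_neg hdvd, if_neg hdvd, mul_zero]
end

section
/- Let p ≥ 5 be prime and let a, h be integers with 1 ≤ a < p. If h² + 12pa − 36a² − p² ≡ 0 (mod 24p), then there exists an integer k with gcd(k,6) = 1 such that h = 6a + pk or h = −6a + pk. -/
open Complex Finset

/-!
Modulo p the congruence reads (h - 6a)(h + 6a) ≡ 0, so h = ±6a + pk. Substituting h = 6a + pk
turns the left side into p (12a(k + 1) + p(k² - 1)), so 24 ∣ 12a(k + 1) + p(k² - 1). Reducing
modulo 6 leaves 6 ∣ p(k² - 1), hence 6 ∣ k² - 1 as p is prime to 6, and then k is prime to 6.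
The case h = -6a + pk is the same with k replaced by -k, since only h² enters.
-/

theorem isCoprime_of_dvd_sq_sub_one {R : Type*} [CommRing R] {n k : R} (h : n ∣ k ^ 2 - 1) :
    IsCoprime k n := by
  obtain ⟨m, hm⟩ := h
  exact ⟨k, -m, by linear_combination hm⟩

theorem Nat.Prime.coprime_six {p : ℕ} (hp : p.Prime) (hp5 : 5 ≤ p) : p.Coprime 6 := by
  refine (hp.coprime_iff_not_dvd).mpr fun hdvd => ?_
  rcases (hp.dvd_mul (m := 2) (n := 3)).mp hdvd with h2 | h3
  · exact absurd (Nat.le_of_dvd two_pos h2) (by omega)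
  · exact absurd (Nat.le_of_dvd three_pos h3) (by omega)

theorem twentyfour_dvd_of_mul_dvd {p a k : ℤ} (hp0 : p ≠ 0)
    (hcong : 24 * p ∣ (6 * a + p * k) ^ 2 + 12 * p * a - 36 * a ^ 2 - p ^ 2) :
    24 ∣ 12 * a * (k + 1) + p * (k ^ 2 - 1) := by
  rw [show (6 * a + p * k) ^ 2 + 12 * p * a - 36 * a ^ 2 - p ^ 2
      = p * (12 * a * (k + 1) + p * (k ^ 2 - 1)) by ring, mul_comm] at hcong
  exact (mul_dvd_mul_iff_left hp0).mp hcong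

theorem gcd_six_eq_one_of_dvd {p a k : ℤ} (hp6 : IsCoprime p 6) (hp0 : p ≠ 0)
    (hcong : 24 * p ∣ (6 * a + p * k) ^ 2 + 12 * p * a - 36 * a ^ 2 - p ^ 2) :
    Int.gcd k 6 = 1 := by
  have h24 := twentyfour_dvd_of_mul_dvd hp0 hcong
  have h6 : (6 : ℤ) ∣ p * (k ^ 2 - 1) :=
    (dvd_add_right (Dvd.intro (2 * a * (k + 1)) (by ring))).mp
      ((Dvd.intro 4 rfl).trans h24)
  exact Int.isCoprime_iff_gcd_eq_one.mp
    (isCoprime_of_dvd_sq_sub_one (hp6.symm.dvd_of_dvd_mul_left h6))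

theorem stmt_4_general (p : ℕ) (hp : p.Prime) (hp5 : 5 ≤ p) (a h : ℤ)
    (hcong : (24 * (p : ℤ)) ∣ (h ^ 2 + 12 * p * a - 36 * a ^ 2 - (p : ℤ) ^ 2)) :
    ∃ k : ℤ, Int.gcd k 6 = 1 ∧ (h = 6 * a + p * k ∨ h = -6 * a + p * k) := by
  have hp0 : (p : ℤ) ≠ 0 := by exact_mod_cast hp.ne_zero
  have hp6 : IsCoprime (p : ℤ) 6 := Nat.isCoprime_iff_coprime.mpr (hp.coprime_six hp5)
  have hfactor : (p : ℤ) ∣ (h - 6 * a) * (h + 6 * a) := by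
    have hp_dvd := (Dvd.intro_left 24 rfl).trans hcong
    rw [show (h - 6 * a) * (h + 6 * a)
        = h ^ 2 + 12 * p * a - 36 * a ^ 2 - (p : ℤ) ^ 2 - p * (12 * a - p) by ring]
    exact hp_dvd.sub (dvd_mul_right _ _)
  rcases (Nat.prime_iff_prime_int.mp hp).dvd_mul.mp hfactor with ⟨k, hk⟩ | ⟨k, hk⟩
  · obtain rfl : h = 6 * a + p * k := by linear_combination hk
    exact ⟨k, gcd_six_eq_one_of_dvd hp6 hp0 hcong, Or.inl rfl⟩
  · obtain rfl : h = -6 * a + p * k := by linear_combination hk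
    have hcong' :
        24 * (p : ℤ) ∣ (6 * a + p * -k) ^ 2 + 12 * p * a - 36 * a ^ 2 - (p : ℤ) ^ 2 := by
      convert hcong using 2; ring
    exact ⟨k, by simpa using gcd_six_eq_one_of_dvd hp6 hp0 hcong', Or.inr rfl⟩

theorem stmt_4 (p : ℕ) (hp : p.Prime) (hp5 : 5 ≤ p) (a h : ℤ)
    (ha : 1 ≤ a ∧ a < p)
    (hcong : (24 * (p : ℤ)) ∣ (h ^ 2 + 12 * p * a - 36 * a ^ 2 - (p : ℤ) ^ 2)) :
    ∃ k : ℤ, Int.gcd k 6 = 1 ∧ (h = 6 * a + p * k ∨ h = -6 * a + p * k) :=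
  stmt_4_general p hp hp5 a h hcong
end

section
/- Let p ≥ 5 be prime, let b be an integer with 1 ≤ b < p, and for integers m ≥ 0 define ν(m,b) = #{x : 0 ≤ x < m and [−xb]_p < b}, where [n]_p denotes the least nonnegative residue of n modulo p. Then ν(m,b) = ⌊mb/p⌋ + 1 if p ∤ m, and ν(m,b) = ⌊mb/p⌋ = mb/p if p | m. -/
open Complex Finset

lemma step_aux (p : ℕ) (hp : p.Prime) (b : ℤ) (hb1 : 1 ≤ b) (hb2 : b < p) (m : ℕ) :
    (if ¬ ((p : ℤ) ∣ ((m:ℤ) + 1)) then ((m:ℤ) + 1) * b / p + 1 else ((m:ℤ) + 1) * b / p)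
      = (if ¬ ((p : ℤ) ∣ (m : ℤ)) then (m : ℤ) * b / p + 1 else (m : ℤ) * b / p)
        + (if (-(m : ℤ) * b) % p < b then 1 else 0) := by
  have hp0 : (0:ℤ) < p := by exact_mod_cast hp.pos
  have hpp : Prime (p:ℤ) := Int.prime_iff_natAbs_prime.mpr (by simpa using hp)
  have hpb : ¬ ((p:ℤ) ∣ b) := by
    intro h
    have := Int.le_of_dvd (by omega) h
    omega
  set q := ((m:ℤ) * b) / p with hq
  set r := ((m:ℤ) * b) % p with hr
  have hqr : (m:ℤ) * b = p * q + r := (Int.mul_ediv_add_emod _ _).symm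
  have hr0 : 0 ≤ r := Int.emod_nonneg _ hp0.ne'
  have hrp : r < p := Int.emod_lt_of_pos _ hp0
  have hneg : (-(m:ℤ) * b) % p = if r = 0 then 0 else p - r := by
    by_cases hcase : r = 0
    · rw [if_pos hcase]
      have : -(m:ℤ) * b = (p : ℤ) * (-q) := by rw [neg_mul, hqr, hcase]; ring
      rw [this]
      exact Int.mul_emod_right _ _
    · rw [if_neg hcase]
      have h1 : -(m:ℤ) * b = (p - r) + (p:ℤ) * (-q - 1) := by rw [neg_mul, hqr]; ring
      rw [h1, Int.add_mul_emod_self_left]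
      exact Int.emod_eq_of_lt (by omega) (by omega)
  have hq' : ((m:ℤ) + 1) * b / p = q + (r + b) / p := by
    have h1 : ((m:ℤ) + 1) * b = (r + b) + (p:ℤ) * q := by rw [add_mul, one_mul, hqr]; ring
    rw [h1, Int.add_mul_ediv_left _ _ hp0.ne']
    ring
  have hrzero : r = 0 ↔ (p:ℤ) ∣ (m:ℤ) := by
    constructor
    · intro h
      have hd : (p:ℤ) ∣ (m:ℤ) * b := Int.dvd_of_emod_eq_zero h
      rcases hpp.dvd_mul.mp hd with h' | h'
      · exact h'
      · exact absurd h' hpb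
    · rintro ⟨k, hk⟩
      rw [hr, hk]
      have : (p:ℤ) * k * b = (p:ℤ) * (k * b) := by ring
      rw [this]
      exact Int.mul_emod_right _ _
  by_cases hm : (p:ℤ) ∣ (m:ℤ)
  · -- p | m : r = 0, cond true, p ∤ m+1
    have hr0' : r = 0 := hrzero.mpr hm
    have hm1 : ¬ ((p:ℤ) ∣ ((m:ℤ) + 1)) := by
      intro h
      have h2 : (p:ℤ) ∣ 1 := (dvd_add_right hm).mp h
      have := Int.le_of_dvd one_pos h2
      omega
    rw [if_pos hm1, if_neg (not_not.mpr hm), hq', hneg, if_pos hr0']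
    rw [if_pos (by omega : (0:ℤ) < b)]
    have : (r + b) / (p:ℤ) = 0 := Int.ediv_eq_zero_of_lt (by omega) (by omega)
    rw [this]
    try ring
    try omega
  · by_cases hm1 : (p:ℤ) ∣ ((m:ℤ) + 1)
    · -- p | m+1 : r = p - b
      have hrval : r = p - b := by
        obtain ⟨k, hk⟩ := hm1
        have h1 : (m:ℤ) * b = ((p:ℤ) - b) + (p:ℤ) * (k * b - 1) := by
          have : (m:ℤ) = (p:ℤ) * k - 1 := by omega
          rw [this]
          try ring
          try omega
        rw [hr, h1, Int.add_mul_emod_self_left]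
        exact Int.emod_eq_of_lt (by omega) (by omega)
      have hcond : ¬ ((-(m:ℤ) * b) % p < b) := by
        rw [hneg, if_neg (by omega : ¬ r = 0)]
        omega
      rw [if_neg (not_not.mpr hm1), if_pos hm, if_neg hcond, hq']
      have : (r + b) / (p:ℤ) = 1 := by
        have h1 : r + b = 0 + (p:ℤ) * 1 := by omega
        rw [h1, Int.add_mul_ediv_left _ _ hp0.ne', Int.zero_ediv]
        try norm_num
      rw [this]
      try ring
      try omega
    · -- p ∤ m, p ∤ m+1
      have hrne : r ≠ 0 := fun h => hm (hrzero.mp h)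
      have hrne2 : r ≠ p - b := by
        intro h
        apply hm1
        have hd : (p:ℤ) ∣ ((m:ℤ) + 1) * b := by
          have h1 : ((m:ℤ) + 1) * b = (p:ℤ) * (q + 1) := by rw [add_mul, one_mul, hqr, h]; ring
          exact ⟨q + 1, h1⟩
        rcases hpp.dvd_mul.mp hd with h' | h'
        · exact h'
        · exact absurd h' hpb
      rw [if_pos hm1, if_pos hm, hq', hneg, if_neg hrne]
      by_cases hlt : r + b < p
      · rw [if_neg (by omega : ¬ (p:ℤ) - r < b)]
        have : (r + b) / (p:ℤ) = 0 := Int.ediv_eq_zero_of_lt (by omega) (by omega)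
        rw [this]
        try ring
        try omega
      · rw [if_pos (by omega : (p:ℤ) - r < b)]
        have : (r + b) / (p:ℤ) = 1 := by
          have h1 : r + b = (r + b - p) + (p:ℤ) * 1 := by ring
          rw [h1, Int.add_mul_ediv_left _ _ hp0.ne']
          rw [Int.ediv_eq_zero_of_lt (by omega) (by omega)]
          try norm_num
        rw [this]
        try ring
        try omega

theorem stmt_5 (p : ℕ) (hp : p.Prime) (hp5 : 5 ≤ p) (b : ℤ) (hb : 1 ≤ b ∧ b < p) (m : ℕ) :
    (((Finset.range m).filter (fun x : ℕ => (-(x : ℤ) * b) % p < b)).card : ℤ) =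
      if ¬ ((p : ℤ) ∣ (m : ℤ)) then (m : ℤ) * b / p + 1 else (m : ℤ) * b / p := by
  induction m with
  | zero =>
      simp
  | succ n ih =>
      rw [Finset.range_add_one, Finset.filter_insert]
      have hstep := step_aux p hp b hb.1 hb.2 n
      push_cast
      by_cases hc : (-(n : ℤ) * b) % p < b
      · rw [if_pos hc, Finset.card_insert_of_notMem (by simp)]
        push_cast
        rw [ih]
        rw [if_pos hc] at hstep
        push_cast at hstep
        linarith [hstep]
      · rw [if_neg hc, ih]
        rw [if_neg hc] at hstep
        push_cast at hstep
        linarith [hstep]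
end

section
/- Let p ≥ 5 be prime, 1 ≤ b < p, and let m ≥ 0 be an integer. Set a = [−mb]_p. If a ≠ 0 (equivalently p ∤ m), then ν(m,b) = (mb + a)/p, where ν(m,b) = #{x : 0 ≤ x < m : [−xb]_p < b}. -/
open Complex Finset

lemma key_count (p : ℕ) (hp : 0 < (p : ℤ)) (b : ℤ) (hb1 : 1 ≤ b) (hbp : b < p) :
    ∀ m : ℕ, (((Finset.range m).filter (fun x : ℕ => (-(x : ℤ) * b) % p < b)).card : ℤ) * p
      = (m : ℤ) * b + (-(m : ℤ) * b) % p := by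
  intro m
  induction m with
  | zero => simp
  | succ n ih =>
    set r : ℤ := (-(n : ℤ) * b) % p with hr
    have hr0 : 0 ≤ r := Int.emod_nonneg _ (ne_of_gt hp)
    have hrp : r < p := Int.emod_lt_of_pos _ hp
    have hnext : (-(↑(n+1) : ℤ) * b) % p = (r - b) % p := by
      have h1 : (-(↑(n+1) : ℤ) * b) = (-(n : ℤ) * b) - b := by push_cast; ring
      rw [h1, Int.sub_emod, ← hr, Int.emod_eq_of_lt (by omega) hbp]
    rw [Finset.range_add_one, Finset.filter_insert]
    by_cases h : (-(n : ℤ) * b) % p < b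
    · rw [if_pos h]
      rw [Finset.card_insert_of_notMem (by simp)]
      have hrb : r < b := h
      have : (r - b) % p = r - b + p := by
        rw [← Int.add_mul_emod_self_left (c := 1), mul_one, Int.emod_eq_of_lt (by omega) (by omega)]
      rw [hnext, this]
      push_cast
      linarith [ih]
    · rw [if_neg h]
      have hrb : b ≤ r := not_lt.mp h
      have : (r - b) % p = r - b := Int.emod_eq_of_lt (by omega) (by omega)
      rw [hnext, this]
      push_cast
      linarith [ih]

theorem stmt_6 (p : ℕ) (hp : p.Prime) (hp5 : 5 ≤ p) (b : ℤ) (hb : 1 ≤ b ∧ b < p) (m : ℕ)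
    (a : ℤ) (ha : a = (-(m : ℤ) * b) % p) (ha0 : a ≠ 0) :
    (((Finset.range m).filter (fun x : ℕ => (-(x : ℤ) * b) % p < b)).card : ℤ) =
      ((m : ℤ) * b + a) / p := by
  have hp0 : 0 < (p : ℤ) := by exact_mod_cast hp.pos
  have key := key_count p hp0 b hb.1 hb.2 m
  rw [ha, ← key, Int.mul_ediv_cancel _ (ne_of_gt hp0)]
end
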